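/- arXiv:2409.11344 — 2 statements merged into one kernel-verified Lean document; each statement's English description precedes it below -/
import Mathlib

section
/- Let φ = (φ_i)_{i≥1} be a sequence with φ_m < 0 for exactly one index m and φ_i > 0 for all i ≠ m, let n ≥ m, and let M > 0. Then the set of the n zeros of Be_n^{φ^{m,M}} interlaces the set of the n zeros of Be_n^φ; for M < 0, the set of the n zeros of Be_n^φ interlaces the set of the n zeros of Be_n^{φ^{m,M}}. -/
open Polynomial
open Finset

/-- The Bell polynomials: `Bell 0 = 1`, `Bell (n+1) = x·(Bell n + (Bell n)')`. -/
noncomputable def Bell : ℕ → Polynomial ℝ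
  | 0 => 1
  | n + 1 => X * (Bell n + derivative (Bell n))

/-- `Phi φ n i` is the elementary symmetric polynomial of degree `i` in `φ 1, …, φ n`. -/
noncomputable def Phi (φ : ℕ → ℝ) (n i : ℕ) : ℝ :=
  ∑ s ∈ Finset.powersetCard i (Finset.Icc 1 n), ∏ j ∈ s, φ j

/-- The generalized Bell polynomial `Be_n^φ = ∑_{j=0}^n Φ^n_{n-j} Be_j`. -/
noncomputable def genBell (φ : ℕ → ℝ) (n : ℕ) : Polynomial ℝ :=
  ∑ j ∈ Finset.range (n + 1), C (Phi φ n (n - j)) * Bell j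

/-- The sequence `φ^{{l}}` obtained from `φ` by removing its `l`-th term
(sequences indexed from 1). -/
def removeIdx (φ : ℕ → ℝ) (l : ℕ) (i : ℕ) : ℝ := if i < l then φ i else φ (i + 1)

/-- The sequence `φ^{l,M}`, obtained by adding `M` to the `l`-th term of `φ`. -/
def addAt (φ : ℕ → ℝ) (l : ℕ) (M : ℝ) (i : ℕ) : ℝ := φ i + if i = l then M else 0

/-- A finite set `U` of reals interlaces a finite set `V` if between any two consecutive
elements of `U` there lies exactly one element of `V`, and either `|U| = |V| + 1`, or
`|U| = |V|` and `max U < max V`. -/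
def Interlaces (U V : Finset ℝ) : Prop :=
  (∀ u₁ ∈ U, ∀ u₂ ∈ U, u₁ < u₂ → (∀ u ∈ U, ¬(u₁ < u ∧ u < u₂)) →
    ∃! v, v ∈ V ∧ u₁ < v ∧ v < u₂) ∧
  (U.card = V.card + 1 ∨ (U.card = V.card ∧ U.max < V.max))

/-- `zeta φ n k` is the `k`-th zero (in increasing order, `k` counted from 1) of the
generalized Bell polynomial `Be_n^φ`. -/
noncomputable def zeta (φ : ℕ → ℝ) (n k : ℕ) : ℝ :=
  ((genBell φ n).roots.toFinset.sort (· ≤ ·)).getD (k - 1) 0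

/-- chain a local strict monotonicity to a global one -/
lemma chain_lt {f : ℕ → ℝ} {n : ℕ} (h : ∀ i, i < n → f i < f (i + 1)) :
    ∀ i j, i < j → j ≤ n → f i < f j := by
  intro i j hij hjn
  induction j with
  | zero => omega
  | succ j ih =>
    rcases Nat.lt_or_ge i j with hj | hj
    · exact (ih hj (by omega)).trans (h j (by omega))
    · have : i = j := by omega
      subst this; exact h i (by omega)

/-- Master root-localization lemma: a monic polynomial of degree `n` alternating in sign
at `n+1` points `y 0 < y 1 < … < y n` has exactly one root in each interval. -/
lemma master_roots (n : ℕ) (q : Polynomial ℝ) (hq : q.Monic) (hdeg : q.natDegree = n)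
    (y : ℕ → ℝ) (hy : ∀ i, i < n → y i < y (i + 1))
    (halt : ∀ i, i < n → eval (y i) q * eval (y (i + 1)) q < 0) :
    ∃ t : ℕ → ℝ, (∀ i, i < n → y i < t i ∧ t i < y (i + 1)) ∧
      q.roots = (Finset.range n).val.map t ∧
      q = ∏ i ∈ Finset.range n, (X - C (t i)) := by
  have hcont : ∀ a b : ℝ, ContinuousOn (fun x => eval x q) (Set.Icc a b) :=
    fun a b => (Polynomial.continuous q).continuousOn
  -- find a root in each interval
  have hroot : ∀ i, i < n → ∃ x, y i < x ∧ x < y (i + 1) ∧ eval x q = 0 := by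
    intro i hi
    have hle : y i ≤ y (i + 1) := (hy i hi).le
    rcases lt_or_ge (eval (y i) q) 0 with hneg | hpos
    · have hpos' : 0 < eval (y (i + 1)) q := by nlinarith [halt i hi]
      have := intermediate_value_Ioo hle (hcont (y i) (y (i+1)))
      have h0 : (0:ℝ) ∈ Set.Ioo (eval (y i) q) (eval (y (i+1)) q) := ⟨hneg, hpos'⟩
      obtain ⟨x, hx, hx0⟩ := this h0
      exact ⟨x, hx.1, hx.2, hx0⟩
    · have hneg' : eval (y (i + 1)) q < 0 := by nlinarith [halt i hi]
      have hpos' : 0 < eval (y i) q := by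
        rcases hpos.lt_or_eq with h | h
        · exact h
        · exfalso; nlinarith [halt i hi]
      have := intermediate_value_Ioo' hle (hcont (y i) (y (i+1)))
      have h0 : (0:ℝ) ∈ Set.Ioo (eval (y (i+1)) q) (eval (y i) q) := ⟨hneg', hpos'⟩
      obtain ⟨x, hx, hx0⟩ := this h0
      exact ⟨x, hx.1, hx.2, hx0⟩
  choose t ht1 ht2 ht3 using hroot
  -- make a total function
  set T : ℕ → ℝ := fun i => if h : i < n then t i h else 0 with hT
  have hTlt : ∀ i, i < n → y i < T i ∧ T i < y (i + 1) := by
    intro i hi; simp only [hT, dif_pos hi]; exact ⟨ht1 i hi, ht2 i hi⟩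
  have hTroot : ∀ i, i < n → eval (T i) q = 0 := by
    intro i hi; simp only [hT, dif_pos hi]; exact ht3 i hi
  have hTmono : ∀ i j, i < n → j < n → i < j → T i < T j := by
    intro i j hi hj hij
    have h1 : T i < y (i + 1) := (hTlt i hi).2
    have h2 : y j < T j := (hTlt j hj).1
    rcases Nat.eq_or_lt_of_le (Nat.succ_le_of_lt hij) with h | h
    · have : i + 1 = j := h
      rw [this] at h1; linarith
    · have := chain_lt hy (i+1) j (by omega) (by omega)
      linarith
  have hinj : ∀ x ∈ (Finset.range n).val, ∀ z ∈ (Finset.range n).val, T x = T z → x = z := by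
    intro a ha b hb hab
    simp only [Finset.mem_val, Finset.mem_range] at ha hb
    by_contra hne
    rcases Nat.lt_or_ge a b with h | h
    · exact absurd hab (ne_of_lt (hTmono a b ha hb h))
    · have : b < a := by omega
      exact absurd hab.symm (ne_of_lt (hTmono b a hb ha this))
  have hnodup : ((Finset.range n).val.map T).Nodup :=
    Multiset.Nodup.map_on hinj (Finset.range n).nodup
  have hq0 : q ≠ 0 := hq.ne_zero
  have hsub : ((Finset.range n).val.map T) ⊆ q.roots := by
    intro a ha
    rw [Multiset.mem_map] at ha
    obtain ⟨i, hi, rfl⟩ := ha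
    simp only [Finset.mem_val, Finset.mem_range] at hi
    rw [mem_roots hq0]
    exact hTroot i hi
  have hle : ((Finset.range n).val.map T) ≤ q.roots :=
    (Multiset.le_iff_subset hnodup).2 hsub
  have hcard : Multiset.card q.roots ≤ Multiset.card ((Finset.range n).val.map T) := by
    rw [Multiset.card_map]
    simpa [hdeg] using q.card_roots'
  have heq : (Finset.range n).val.map T = q.roots := Multiset.eq_of_le_of_card_le hle hcard
  have hcard' : Multiset.card q.roots = q.natDegree := by
    rw [← heq, Multiset.card_map, hdeg]; simp
  have hprod := Polynomial.prod_multiset_X_sub_C_of_monic_of_roots_card_eq hq hcard'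
  refine ⟨T, hTlt, heq.symm, ?_⟩
  rw [← hprod, ← heq, Multiset.map_map]
  rfl

lemma mul_neg_of_signs {a : ℕ} {A B : ℝ} (h1 : 0 < (-1:ℝ)^(a+1) * A)
    (h2 : 0 < (-1:ℝ)^a * B) : A * B < 0 := by
  have he : ((-1:ℝ)^a) * ((-1:ℝ)^a) = 1 := by
    rw [← pow_add]
    exact Even.neg_one_pow ⟨a, rfl⟩
  have := mul_pos h1 h2
  rw [pow_succ] at this
  nlinarith [this, he]

lemma exists_high (q : Polynomial ℝ) (hq : 0 < q.leadingCoeff) (hd : 0 < q.degree) (b : ℝ) :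
    ∃ x, b < x ∧ 0 < eval x q := by
  have h := q.tendsto_atTop_of_leadingCoeff_nonneg hd hq.le
  obtain ⟨x, hx1, hx2⟩ := ((h.eventually_gt_atTop 0).and (Filter.eventually_gt_atTop b)).exists
  exact ⟨x, hx2, hx1⟩

lemma exists_low (q : Polynomial ℝ) (hq : q.Monic) (hd : 0 < q.natDegree) (b : ℝ) :
    ∃ x, x < b ∧ 0 < (-1:ℝ)^q.natDegree * eval x q := by
  set n := q.natDegree with hn
  set r : Polynomial ℝ := C ((-1:ℝ)^n) * q.comp (-X) with hr
  have hq0 : q ≠ 0 := hq.ne_zero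
  have hnX : (-X : Polynomial ℝ).natDegree = 1 := by simp
  have hcompdeg : (q.comp (-X)).natDegree = n := by
    rw [natDegree_comp, hnX, mul_one]
  have hcomp0 : q.comp (-X) ≠ 0 := by
    intro h
    have : (q.comp (-X)).natDegree = 0 := by rw [h]; simp
    omega
  have hlc : r.leadingCoeff = 1 := by
    rw [hr, leadingCoeff_mul, leadingCoeff_C, leadingCoeff_comp (by rw [hnX]; omega)]
    have : (-X : Polynomial ℝ).leadingCoeff = -1 := by
      simp [leadingCoeff_neg]
    rw [this, hq.leadingCoeff, one_mul, ← hn, ← pow_add]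
    exact Even.neg_one_pow ⟨n, rfl⟩
  have hrdeg : r.natDegree = n := by
    rw [hr, natDegree_C_mul (by positivity), hcompdeg]
  have hr0 : r ≠ 0 := by
    intro h; rw [h] at hlc; simp at hlc
  have hrd : 0 < r.degree := by
    rw [degree_eq_natDegree hr0, hrdeg]
    exact_mod_cast hd
  obtain ⟨x, hx1, hx2⟩ := exists_high r (by rw [hlc]; norm_num) hrd (-b)
  refine ⟨-x, by linarith, ?_⟩
  have : eval x r = (-1:ℝ)^n * eval (-x) q := by
    rw [hr, eval_mul, eval_C, eval_comp]
    simp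
  rw [this] at hx2
  exact hx2

/-- Localization "LA": monic `q` of degree `n+1`, with `n+1` alternating points
`w 0 < … < w n` ending positive: roots `t 0 < w 0 < t 1 < w 1 < … < t n < w n`. -/
lemma rootsLA (n : ℕ) (q : Polynomial ℝ) (hq : q.Monic) (hdeg : q.natDegree = n + 1)
    (w : ℕ → ℝ) (hw : ∀ i, i < n → w i < w (i + 1))
    (hsign : ∀ i, i ≤ n → 0 < (-1:ℝ)^(n - i) * eval (w i) q) :
    ∃ t : ℕ → ℝ, q.roots = (Finset.range (n + 1)).val.map t ∧
      q = ∏ i ∈ Finset.range (n + 1), (X - C (t i)) ∧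
      (∀ i, i ≤ n → t i < w i) ∧ (∀ i, i < n → w i < t (i + 1)) := by
  obtain ⟨x₀, hx₀b, hx₀s⟩ := exists_low q hq (by omega) (w 0)
  rw [hdeg] at hx₀s
  set y : ℕ → ℝ := fun i => if i = 0 then x₀ else w (i - 1) with hy
  have hy0 : y 0 = x₀ := by simp [hy]
  have hys : ∀ i, y (i + 1) = w i := by intro i; simp [hy]
  have hymono : ∀ i, i < n + 1 → y i < y (i + 1) := by
    intro i hi
    rcases Nat.eq_zero_or_pos i with rfl | hpos
    · rw [hy0, hys]; exact hx₀b
    · obtain ⟨j, rfl⟩ := Nat.exists_eq_succ_of_ne_zero (by omega : i ≠ 0)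
      rw [hys, hys]; exact hw j (by omega)
  have hyalt : ∀ i, i < n + 1 → eval (y i) q * eval (y (i + 1)) q < 0 := by
    intro i hi
    rcases Nat.eq_zero_or_pos i with rfl | hpos
    · rw [hy0, hys]
      have h2 := hsign 0 (by omega)
      simp only [Nat.sub_zero] at h2
      exact mul_neg_of_signs hx₀s h2
    · obtain ⟨j, rfl⟩ := Nat.exists_eq_succ_of_ne_zero (by omega : i ≠ 0)
      rw [hys, hys]
      have h1 := hsign j (by omega)
      have h2 := hsign (j + 1) (by omega)
      have hexp : n - j = (n - (j + 1)) + 1 := by omega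
      rw [hexp] at h1
      exact mul_neg_of_signs h1 h2
  obtain ⟨t, htlt, hroots, hprod⟩ := master_roots (n + 1) q hq hdeg y hymono hyalt
  refine ⟨t, hroots, hprod, ?_, ?_⟩
  · intro i hi
    have := (htlt i (by omega)).2
    rwa [hys] at this
  · intro i hi
    have := (htlt (i + 1) (by omega)).1
    rwa [hys] at this

/-- Localization "LB": monic `q` of degree `n+1`, with `n` alternating points
`w 0 < … < w (n-1)` ending negative: roots `t 0 < w 0 < t 1 < … < w (n-1) < t n`. -/
lemma rootsLB (n : ℕ) (q : Polynomial ℝ) (hq : q.Monic) (hdeg : q.natDegree = n + 1)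
    (w : ℕ → ℝ) (hw : ∀ i, i + 1 < n → w i < w (i + 1))
    (hsign : ∀ i, i < n → 0 < (-1:ℝ)^(n - i) * eval (w i) q) :
    ∃ t : ℕ → ℝ, q.roots = (Finset.range (n + 1)).val.map t ∧
      q = ∏ i ∈ Finset.range (n + 1), (X - C (t i)) ∧
      (∀ i, i < n → t i < w i ∧ w i < t (i + 1)) := by
  obtain ⟨x₀, hx₀b, hx₀s⟩ := exists_low q hq (by omega) (if n = 0 then 0 else w 0)
  rw [hdeg] at hx₀s
  have hq0 : q ≠ 0 := hq.ne_zero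
  have hdpos : 0 < q.degree := by
    rw [degree_eq_natDegree hq0, hdeg]; exact_mod_cast Nat.succ_pos n
  obtain ⟨x₁, hx₁b, hx₁s⟩ := exists_high q (by rw [hq.leadingCoeff]; norm_num) hdpos
    (max x₀ (if n = 0 then 0 else w (n - 1)))
  set y : ℕ → ℝ := fun i => if i = 0 then x₀ else if i ≤ n then w (i - 1) else x₁ with hy
  have hy0 : y 0 = x₀ := by simp [hy]
  have hys : ∀ i, i < n → y (i + 1) = w i := by
    intro i hi; simp only [hy]
    rw [if_neg (by omega), if_pos (by omega)]
    simp
  have hytop : y (n + 1) = x₁ := by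
    simp only [hy]
    rw [if_neg (by omega), if_neg (by omega)]
  have hymono : ∀ i, i < n + 1 → y i < y (i + 1) := by
    intro i hi
    rcases Nat.eq_zero_or_pos i with rfl | hpos
    · rcases Nat.eq_zero_or_pos n with rfl | hn
      · rw [hy0, hytop]
        exact lt_of_le_of_lt (le_max_left _ _) hx₁b
      · rw [hy0, hys 0 hn]
        rw [if_neg (by omega)] at hx₀b
        exact hx₀b
    · rcases Nat.lt_or_ge (i + 1) (n + 1) with h | h
      · obtain ⟨j, rfl⟩ := Nat.exists_eq_succ_of_ne_zero (by omega : i ≠ 0)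
        rw [hys j (by omega), hys (j+1) (by omega)]
        exact hw j (by omega)
      · have hin : i = n := by omega
        have h2 : y n = w (n - 1) := by
          have := hys (n - 1) (by omega)
          rwa [Nat.sub_add_cancel (by omega)] at this
        rw [hin, hytop, h2]
        have h1 : w (n - 1) = (if n = 0 then 0 else w (n-1)) := by rw [if_neg (by omega)]
        rw [h1]
        exact lt_of_le_of_lt (le_max_right _ _) hx₁b
  have hyalt : ∀ i, i < n + 1 → eval (y i) q * eval (y (i + 1)) q < 0 := by
    intro i hi
    rcases Nat.eq_zero_or_pos i with rfl | hpos
    · rcases Nat.eq_zero_or_pos n with rfl | hn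
      · rw [hy0, hytop]
        exact mul_neg_of_signs hx₀s (by simpa using hx₁s)
      · rw [hy0, hys 0 hn]
        have h2 := hsign 0 hn
        simp only [Nat.sub_zero] at h2
        exact mul_neg_of_signs hx₀s h2
    · rcases Nat.lt_or_ge (i + 1) (n + 1) with h | h
      · obtain ⟨j, rfl⟩ := Nat.exists_eq_succ_of_ne_zero (by omega : i ≠ 0)
        rw [hys j (by omega), hys (j + 1) (by omega)]
        have h1 := hsign j (by omega)
        have h2 := hsign (j + 1) (by omega)
        have hexp : n - j = (n - (j + 1)) + 1 := by omega
        rw [hexp] at h1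
        exact mul_neg_of_signs h1 h2
      · have hin : i = n := by omega
        have h2 : y n = w (n - 1) := by
          have := hys (n - 1) (by omega)
          rwa [Nat.sub_add_cancel (by omega)] at this
        rw [hin, hytop, h2]
        have h1 := hsign (n - 1) (by omega)
        have hexp : n - (n - 1) = 0 + 1 := by omega
        rw [hexp] at h1
        exact mul_neg_of_signs h1 (by simpa using hx₁s)
  obtain ⟨t, htlt, hroots, hprod⟩ := master_roots (n + 1) q hq hdeg y hymono hyalt
  refine ⟨t, hroots, hprod, ?_⟩
  intro i hi
  constructor
  · have := (htlt i (by omega)).2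
    rwa [hys i hi] at this
  · have := (htlt (i + 1) (by omega)).1
    rwa [hys i hi] at this

lemma prod_sign_aux {ι : Type*} [DecidableEq ι] (F N : Finset ι) (f : ι → ℝ) (hN : N ⊆ F)
    (hneg : ∀ i ∈ N, f i < 0) (hpos : ∀ i ∈ F, i ∉ N → 0 < f i) :
    0 < (-1:ℝ)^N.card * ∏ i ∈ F, f i := by
  have h1 : 0 < ∏ i ∈ F \ N, f i :=
    Finset.prod_pos fun i hi => hpos i (Finset.mem_sdiff.1 hi).1 (Finset.mem_sdiff.1 hi).2
  have h3 : 0 < ∏ i ∈ N, (-(f i)) :=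
    Finset.prod_pos fun i hi => neg_pos.2 (hneg i hi)
  have h2 : ∏ i ∈ N, (-(f i)) = (-1:ℝ)^N.card * ∏ i ∈ N, f i := by
    rw [← Finset.prod_const (-1:ℝ), ← Finset.prod_mul_distrib]
    exact Finset.prod_congr rfl fun i _ => by ring
  have key : (-1:ℝ)^N.card * ∏ i ∈ F, f i = (∏ i ∈ N, (-(f i))) * ∏ i ∈ F \ N, f i := by
    rw [← Finset.prod_sdiff hN, h2]; ring
  rw [key]
  exact mul_pos h3 h1

lemma filter_card_range (k c : ℕ) :
    ((Finset.range k).filter (fun j => c ≤ j)).card = k - c := by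
  have : (Finset.range k).filter (fun j => c ≤ j) = Finset.Ico c k := by
    ext j; simp only [Finset.mem_filter, Finset.mem_range, Finset.mem_Ico]; omega
  rw [this, Nat.card_Ico]

lemma prod_sign (s : ℕ → ℝ) (k c : ℕ) (x : ℝ)
    (h1 : ∀ j, j < k → j < c → s j < x) (h2 : ∀ j, j < k → c ≤ j → x < s j) :
    0 < (-1:ℝ)^(k - c) * ∏ j ∈ Finset.range k, (x - s j) := by
  have := prod_sign_aux (Finset.range k) ((Finset.range k).filter (fun j => c ≤ j))
    (fun j => x - s j) (Finset.filter_subset _ _)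
    (fun i hi => by
      simp only [Finset.mem_filter, Finset.mem_range] at hi
      linarith [h2 i hi.1 hi.2])
    (fun i hi hni => by
      simp only [Finset.mem_filter, Finset.mem_range] at hi hni
      have : i < c := by omega
      linarith [h1 i hi this])
  rwa [filter_card_range] at this

noncomputable def prodP (s : ℕ → ℝ) (k : ℕ) : Polynomial ℝ :=
  ∏ i ∈ Finset.range k, (X - C (s i))

lemma prodP_monic (s : ℕ → ℝ) (k : ℕ) : (prodP s k).Monic :=
  monic_prod_of_monic _ _ fun i _ => monic_X_sub_C (s i)

lemma prodP_natDegree (s : ℕ → ℝ) (k : ℕ) : (prodP s k).natDegree = k := by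
  rw [prodP, natDegree_prod_of_monic _ _ fun i _ => monic_X_sub_C (s i)]
  simp

lemma prodP_eval (s : ℕ → ℝ) (k : ℕ) (x : ℝ) :
    eval x (prodP s k) = ∏ j ∈ Finset.range k, (x - s j) := by
  rw [prodP, eval_prod]; simp

lemma prodP_eval_deriv (s : ℕ → ℝ) (k : ℕ) (i : ℕ) (hi : i < k) :
    eval (s i) (derivative (prodP s k)) = ∏ j ∈ (Finset.range k).erase i, (s i - s j) := by
  have hmem : i ∈ Finset.range k := Finset.mem_range.2 hi
  rw [prodP, ← Finset.mul_prod_erase (Finset.range k) (fun j => X - C (s j)) hmem,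
    derivative_mul, eval_add, eval_mul, eval_mul]
  simp only [derivative_sub, derivative_X, derivative_C, sub_zero, eval_one, eval_sub, eval_X,
    eval_C, sub_self, zero_mul, one_mul, add_zero, mul_zero]
  rw [eval_prod]
  exact Finset.prod_congr rfl fun j _ => by simp

lemma prodP_deriv_sign (s : ℕ → ℝ) (k : ℕ) (hs : ∀ i, i + 1 < k → s i < s (i + 1))
    (i : ℕ) (hi : i < k) :
    0 < (-1:ℝ)^(k - 1 - i) * eval (s i) (derivative (prodP s k)) := by
  have hchain : ∀ a b, a < b → b < k → s a < s b := by
    intro a b hab hbk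
    exact chain_lt (f := s) (n := k - 1) (fun j hj => hs j (by omega)) a b hab (by omega)
  rw [prodP_eval_deriv s k i hi]
  have := prod_sign_aux ((Finset.range k).erase i)
    (((Finset.range k).erase i).filter (fun j => i ≤ j)) (fun j => s i - s j)
    (Finset.filter_subset _ _)
    (fun j hj => by
      simp only [Finset.mem_filter, Finset.mem_erase, Finset.mem_range] at hj
      have : i < j := by omega
      linarith [hchain i j this hj.1.2])
    (fun j hj hnj => by
      simp only [Finset.mem_filter, Finset.mem_erase, Finset.mem_range] at hj hnj
      have : j < i := by omega
      linarith [hchain j i this hi])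
  have hcard : (((Finset.range k).erase i).filter (fun j => i ≤ j)).card = k - 1 - i := by
    have : ((Finset.range k).erase i).filter (fun j => i ≤ j) = Finset.Ico (i+1) k := by
      ext j
      simp only [Finset.mem_filter, Finset.mem_erase, Finset.mem_range, Finset.mem_Ico]
      omega
    rw [this, Nat.card_Ico]; omega
  rwa [hcard] at this

noncomputable def Fq (s : ℕ → ℝ) (k : ℕ) (c : ℝ) : Polynomial ℝ :=
  (X + C c) * prodP s k + X * derivative (prodP s k)

lemma Fq_A_monic (s : ℕ → ℝ) (k : ℕ) (c : ℝ) : ((X + C c) * prodP s k).Monic :=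
  (monic_X_add_C c).mul (prodP_monic s k)

lemma Fq_A_natDegree (s : ℕ → ℝ) (k : ℕ) (c : ℝ) :
    ((X + C c) * prodP s k).natDegree = k + 1 := by
  rw [(monic_X_add_C c).natDegree_mul (prodP_monic s k), natDegree_X_add_C, prodP_natDegree]
  omega

lemma Fq_B_degree (s : ℕ → ℝ) (k : ℕ) (c : ℝ) :
    (X * derivative (prodP s k)).degree < ((X + C c) * prodP s k).degree := by
  have hAdeg : ((X + C c) * prodP s k).degree = ((k + 1 : ℕ) : WithBot ℕ) := by
    rw [degree_eq_natDegree (Fq_A_monic s k c).ne_zero, Fq_A_natDegree]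
  rw [hAdeg]
  by_cases hd : derivative (prodP s k) = 0
  · rw [hd, mul_zero, degree_zero]
    exact WithBot.bot_lt_coe _
  · have hk : 1 ≤ k := by
      by_contra h
      have : k = 0 := by omega
      apply hd
      rw [this, prodP]
      simp
    have h1 : (X * derivative (prodP s k)).natDegree ≤ k := by
      refine le_trans (natDegree_mul_le) ?_
      have := natDegree_derivative_le (prodP s k)
      rw [prodP_natDegree] at this
      rw [natDegree_X]
      omega
    calc (X * derivative (prodP s k)).degree ≤ ((X * derivative (prodP s k)).natDegree : WithBot ℕ) :=
          degree_le_natDegree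
    _ ≤ (k : WithBot ℕ) := by exact_mod_cast h1
    _ < ((k + 1 : ℕ) : WithBot ℕ) := by exact_mod_cast Nat.lt_succ_self k

lemma Fq_monic (s : ℕ → ℝ) (k : ℕ) (c : ℝ) : (Fq s k c).Monic :=
  (Fq_A_monic s k c).add_of_left (Fq_B_degree s k c)

lemma Fq_natDegree (s : ℕ → ℝ) (k : ℕ) (c : ℝ) : (Fq s k c).natDegree = k + 1 := by
  have h := degree_add_eq_left_of_degree_lt (Fq_B_degree s k c)
  have : (Fq s k c).degree = ((k + 1 : ℕ) : WithBot ℕ) := by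
    rw [Fq, h, degree_eq_natDegree (Fq_A_monic s k c).ne_zero, Fq_A_natDegree]
  exact natDegree_eq_of_degree_eq_some this

lemma Fq_eval_root (s : ℕ → ℝ) (k : ℕ) (c : ℝ) (i : ℕ) (hi : i < k) :
    eval (s i) (Fq s k c) = s i * eval (s i) (derivative (prodP s k)) := by
  rw [Fq, eval_add, eval_mul, eval_mul, eval_add, eval_X, eval_C, prodP_eval]
  rw [Finset.prod_eq_zero (Finset.mem_range.2 hi) (by simp)]
  ring

lemma Fq_sign_at_root (s : ℕ → ℝ) (k : ℕ) (hs : ∀ i, i + 1 < k → s i < s (i + 1))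
    (hneg : ∀ i, i < k → s i < 0) (c : ℝ) (i : ℕ) (hi : i < k) :
    0 < (-1:ℝ)^(k - i) * eval (s i) (Fq s k c) := by
  have hd := prodP_deriv_sign s k hs i hi
  rw [Fq_eval_root s k c i hi]
  have hexp : k - i = (k - 1 - i) + 1 := by omega
  rw [hexp, pow_succ]
  have h2 : (-1:ℝ)^(k - 1 - i) * -1 * (s i * eval (s i) (derivative (prodP s k)))
      = ((-1:ℝ)^(k - 1 - i) * eval (s i) (derivative (prodP s k))) * (-(s i)) := by ring
  rw [h2]
  exact mul_pos hd (neg_pos.2 (hneg i hi))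

lemma lemmaF (k : ℕ) (s : ℕ → ℝ) (hs : ∀ i, i + 1 < k → s i < s (i + 1))
    (hneg : ∀ i, i < k → s i < 0) (c : ℝ) :
    ∃ t : ℕ → ℝ, (Fq s k c).roots = (Finset.range (k + 1)).val.map t ∧
      Fq s k c = prodP t (k + 1) ∧ (∀ i, i < k → t i < s i ∧ s i < t (i + 1)) := by
  obtain ⟨t, hroots, hprod, hpat⟩ := rootsLB k (Fq s k c) (Fq_monic s k c) (Fq_natDegree s k c)
    s hs (fun i hi => Fq_sign_at_root s k hs hneg c i hi)
  exact ⟨t, hroots, hprod, hpat⟩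

lemma injOn_of_mono (k : ℕ) (f : ℕ → ℝ) (hmono : ∀ i j, i < j → j ≤ k → f i < f j) :
    Set.InjOn f (Finset.range (k + 1)) := by
  intro a ha b hb hab
  simp only [Finset.coe_range, Set.mem_Iio] at ha hb
  rcases Nat.lt_trichotomy a b with h | h | h
  · exact absurd hab (ne_of_lt (hmono a b h (by omega)))
  · exact h
  · exact absurd hab.symm (ne_of_lt (hmono b a h (by omega)))

lemma max_image_range (k : ℕ) (f : ℕ → ℝ) (hmono : ∀ i j, i < j → j ≤ k → f i < f j) :
    (Finset.image f (Finset.range (k + 1))).max = (f k : WithBot ℝ) := by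
  have hmem : f k ∈ Finset.image f (Finset.range (k + 1)) :=
    Finset.mem_image.2 ⟨k, Finset.mem_range.2 (by omega), rfl⟩
  have hne : (Finset.image f (Finset.range (k + 1))).Nonempty := ⟨f k, hmem⟩
  rw [← Finset.coe_max' hne]
  congr 1
  apply le_antisymm
  · apply Finset.max'_le
    intro y hy
    obtain ⟨i, hi, rfl⟩ := Finset.mem_image.1 hy
    rw [Finset.mem_range] at hi
    rcases Nat.lt_or_ge i k with h | h
    · exact (hmono i k h le_rfl).le
    · have : i = k := by omega
      rw [this]
  · exact Finset.le_max' _ _ hmem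

lemma interlaces_pattern (k : ℕ) (u t : ℕ → ℝ)
    (h1 : ∀ i, i ≤ k → u i < t i) (h2 : ∀ i, i < k → t i < u (i + 1)) :
    Interlaces (Finset.image u (Finset.range (k + 1)))
      (Finset.image t (Finset.range (k + 1))) := by
  have humono : ∀ i j, i < j → j ≤ k → u i < u j :=
    chain_lt (fun i hi => (h1 i (by omega)).trans (h2 i hi))
  have htmono : ∀ i j, i < j → j ≤ k → t i < t j :=
    chain_lt (fun i hi => (h2 i hi).trans (h1 (i + 1) (by omega)))
  have hule : ∀ i j, i ≤ j → j ≤ k → u i ≤ u j := by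
    intro i j hij hjk
    rcases Nat.eq_or_lt_of_le hij with rfl | h
    · exact le_rfl
    · exact (humono i j h hjk).le
  constructor
  · intro u₁ hu₁ u₂ hu₂ hlt hcons
    obtain ⟨i, hi, rfl⟩ := Finset.mem_image.1 hu₁
    obtain ⟨j, hj, rfl⟩ := Finset.mem_image.1 hu₂
    rw [Finset.mem_range] at hi hj
    have hij : i < j := by
      rcases Nat.lt_trichotomy i j with h | h | h
      · exact h
      · exfalso; rw [h] at hlt; exact lt_irrefl _ hlt
      · exact absurd (humono j i h (by omega)) (not_lt.2 hlt.le)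
    have hji : j = i + 1 := by
      by_contra h
      have h3 : i + 1 < j := by omega
      have hmem : u (i + 1) ∈ Finset.image u (Finset.range (k + 1)) :=
        Finset.mem_image.2 ⟨i + 1, Finset.mem_range.2 (by omega), rfl⟩
      exact hcons (u (i + 1)) hmem
        ⟨humono i (i + 1) (by omega) (by omega), humono (i + 1) j h3 (by omega)⟩
    subst hji
    refine ⟨t i, ⟨Finset.mem_image.2 ⟨i, Finset.mem_range.2 (by omega), rfl⟩,
      h1 i (by omega), h2 i (by omega)⟩, ?_⟩
    rintro v ⟨hvmem, hv1, hv2⟩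
    obtain ⟨j', hj', rfl⟩ := Finset.mem_image.1 hvmem
    rw [Finset.mem_range] at hj'
    rcases Nat.lt_trichotomy j' i with h | h | h
    · exfalso
      have ha : t j' < u (j' + 1) := h2 j' (by omega)
      have hb : u (j' + 1) ≤ u i := hule (j' + 1) i (by omega) (by omega)
      linarith
    · rw [h]
    · exfalso
      have ha : u (i + 1) ≤ u j' := hule (i + 1) j' (by omega) (by omega)
      have hb : u j' < t j' := h1 j' (by omega)
      linarith
  · right
    constructor
    · rw [Finset.card_image_of_injOn (injOn_of_mono k u humono),
        Finset.card_image_of_injOn (injOn_of_mono k t htmono)]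
    · rw [max_image_range k u humono, max_image_range k t htmono]
      exact_mod_cast h1 k le_rfl

lemma pert (k : ℕ) (s : ℕ → ℝ) (hs : ∀ i, i + 1 < k → s i < s (i + 1))
    (hneg : ∀ i, i < k → s i < 0) (c c' : ℝ) (hcc : c < c') :
    Interlaces ((Fq s k c').roots.toFinset) ((Fq s k c).roots.toFinset) := by
  obtain ⟨t, hroots, hprod, hpat⟩ := lemmaF k s hs hneg c
  have htmono : ∀ i, i < k → t i < t (i + 1) :=
    fun i hi => ((hpat i hi).1).trans (hpat i hi).2
  have htchain : ∀ a b, a < b → b ≤ k → t a < t b := chain_lt htmono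
  have hschain : ∀ a b, a < b → b < k → s a < s b := by
    intro a b hab hbk
    exact chain_lt (f := s) (n := k - 1) (fun j hj => hs j (by omega)) a b hab (by omega)
  have hsP : ∀ i, i ≤ k → 0 < (-1:ℝ)^(k - i) * eval (t i) (prodP s k) := by
    intro i hi
    rw [prodP_eval]
    apply prod_sign s k i (t i)
    · intro j hj hji
      have ha : s j < t (j + 1) := (hpat j hj).2
      have hb : t (j + 1) ≤ t i := by
        rcases Nat.eq_or_lt_of_le (show j + 1 ≤ i by omega) with he | hl
        · rw [he]
        · exact (htchain (j + 1) i hl (by omega)).le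
      linarith
    · intro j hj hij
      have ha : t i < s i := by
        have hik : i < k := by omega
        exact (hpat i hik).1
      rcases Nat.eq_or_lt_of_le hij with rfl | hl
      · exact ha
      · exact ha.trans (hschain i j hl hj)
  have key : Fq s k c' = Fq s k c + C (c' - c) * prodP s k := by
    rw [Fq, Fq, map_sub]; ring
  have hsign' : ∀ i, i ≤ k → 0 < (-1:ℝ)^(k - i) * eval (t i) (Fq s k c') := by
    intro i hi
    rw [key, eval_add, eval_mul, eval_C]
    have h0 : eval (t i) (Fq s k c) = 0 := by
      rw [hprod, prodP_eval]
      exact Finset.prod_eq_zero (i := i) (Finset.mem_range.2 (by omega : i < k + 1)) (by simp)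
    rw [h0, zero_add]
    have h1 := hsP i hi
    have h2 : (-1:ℝ)^(k - i) * ((c' - c) * eval (t i) (prodP s k))
        = ((-1:ℝ)^(k - i) * eval (t i) (prodP s k)) * (c' - c) := by ring
    rw [h2]
    exact mul_pos h1 (sub_pos.2 hcc)
  obtain ⟨uu, huroots, _, hu1, hu2⟩ := rootsLA k (Fq s k c') (Fq_monic s k c')
    (Fq_natDegree s k c') t htmono hsign'
  have hU : (Fq s k c').roots.toFinset = Finset.image uu (Finset.range (k + 1)) := by
    rw [huroots, Multiset.toFinset_map, Finset.val_toFinset]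
  have hV : (Fq s k c).roots.toFinset = Finset.image t (Finset.range (k + 1)) := by
    rw [hroots, Multiset.toFinset_map, Finset.val_toFinset]
  rw [hU, hV]
  exact interlaces_pattern k uu t hu1 hu2

lemma Phi_esymm (φ : ℕ → ℝ) (n i : ℕ) :
    Phi φ n i = ((Finset.Icc 1 n).val.map φ).esymm i :=
  (Finset.esymm_map_val φ _ i).symm

lemma Phi_zero (φ : ℕ → ℝ) (n : ℕ) : Phi φ n 0 = 1 := by
  simp [Phi]

lemma Phi_gt (φ : ℕ → ℝ) (n i : ℕ) (h : n < i) : Phi φ n i = 0 := by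
  rw [Phi, Finset.powersetCard_eq_empty.2 (by rw [Nat.card_Icc]; omega), Finset.sum_empty]

lemma esymm_cons (a : ℝ) (s : Multiset ℝ) (i : ℕ) :
    (a ::ₘ s).esymm (i + 1) = s.esymm (i + 1) + a * s.esymm i := by
  rw [Multiset.esymm, Multiset.powersetCard_cons, Multiset.map_add, Multiset.sum_add,
    Multiset.map_map]
  congr 1
  rw [Multiset.esymm, ← Multiset.sum_map_mul_left]
  congr 1
  apply Multiset.map_congr rfl
  intro u _
  simp [Multiset.prod_cons]

lemma multiset_remove (φ : ℕ → ℝ) (m n : ℕ) (h1 : 1 ≤ m) (h2 : m ≤ n) :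
    (Finset.Icc 1 n).val.map φ = φ m ::ₘ (Finset.Icc 1 (n - 1)).val.map (removeIdx φ m) := by
  have hmem : m ∈ Finset.Icc 1 n := Finset.mem_Icc.2 ⟨h1, h2⟩
  have hval : (Finset.Icc 1 n).val = m ::ₘ ((Finset.Icc 1 n).erase m).val := by
    rw [Finset.erase_val]
    exact (Multiset.cons_erase (Finset.mem_def.1 hmem)).symm
  rw [hval, Multiset.map_cons]
  congr 1
  set g : ℕ → ℕ := fun i => if i < m then i else i + 1 with hg
  have hinj : Set.InjOn g (Finset.Icc 1 (n - 1)) := by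
    intro a _ b _ hab
    simp only [hg] at hab
    split_ifs at hab <;> omega
  have himg : Finset.image g (Finset.Icc 1 (n - 1)) = (Finset.Icc 1 n).erase m := by
    ext j
    simp only [Finset.mem_image, Finset.mem_Icc, Finset.mem_erase, hg]
    constructor
    · rintro ⟨i, hi, rfl⟩
      split_ifs <;> omega
    · rintro ⟨hj1, hj2⟩
      refine ⟨if j < m then j else j - 1, ?_, ?_⟩
      · split_ifs <;> omega
      · split_ifs <;> omega
  have hcomp : ∀ i, removeIdx φ m i = φ (g i) := by
    intro i
    simp only [removeIdx, hg]
    split_ifs <;> rfl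
  rw [← himg, Finset.image_val_of_injOn hinj, Multiset.map_map]
  apply Multiset.map_congr rfl
  intro i _
  exact (hcomp i).symm

lemma Phi_peel (φ : ℕ → ℝ) (m n i : ℕ) (h1 : 1 ≤ m) (h2 : m ≤ n) :
    Phi φ n (i + 1) =
      Phi (removeIdx φ m) (n - 1) (i + 1) + φ m * Phi (removeIdx φ m) (n - 1) i := by
  rw [Phi_esymm, Phi_esymm, Phi_esymm, multiset_remove φ m n h1 h2, esymm_cons]

lemma genBell_peel (φ : ℕ → ℝ) (m k : ℕ) (hm : 1 ≤ m) (hmn : m ≤ k + 1) :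
    genBell φ (k + 1) = (X + C (φ m)) * genBell (removeIdx φ m) k
      + X * derivative (genBell (removeIdx φ m) k) := by
  set ψ := removeIdx φ m with hψ
  set a := φ m with ha
  have hd : derivative (genBell ψ k) =
      ∑ j ∈ Finset.range (k + 1), C (Phi ψ k (k - j)) * derivative (Bell j) := by
    rw [genBell, derivative_sum]
    exact Finset.sum_congr rfl fun j _ => by rw [derivative_C_mul]
  have hrhs : (X + C a) * genBell ψ k + X * derivative (genBell ψ k)
      = (∑ j ∈ Finset.range (k + 1), C (Phi ψ k (k - j)) * Bell (j + 1))
        + C a * genBell ψ k := by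
    rw [hd, add_mul, genBell, Finset.mul_sum, Finset.mul_sum, Finset.mul_sum, add_right_comm]
    congr 1
    rw [← Finset.sum_add_distrib]
    apply Finset.sum_congr rfl
    intro j _
    show X * (C (Phi ψ k (k - j)) * Bell j) + X * (C (Phi ψ k (k - j)) * derivative (Bell j))
      = C (Phi ψ k (k - j)) * Bell (j + 1)
    rw [show Bell (j + 1) = X * (Bell j + derivative (Bell j)) from rfl]
    ring
  rw [hrhs, genBell, Finset.sum_range_succ]
  have hlast : Phi φ (k + 1) (k + 1 - (k + 1)) = 1 := by
    rw [Nat.sub_self, Phi_zero]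
  rw [hlast, map_one, one_mul]
  have hsplit : ∀ j ∈ Finset.range (k + 1), C (Phi φ (k + 1) (k + 1 - j)) * Bell j
      = C (Phi ψ k (k - j + 1)) * Bell j + C a * (C (Phi ψ k (k - j)) * Bell j) := by
    intro j hj
    rw [Finset.mem_range] at hj
    have he : k + 1 - j = (k - j) + 1 := by omega
    rw [he, Phi_peel φ m (k + 1) (k - j) hm hmn]
    simp only [Nat.add_sub_cancel]
    rw [map_add, map_mul, add_mul, ← ha, ← hψ]
    ring
  rw [Finset.sum_congr rfl hsplit, Finset.sum_add_distrib]
  have hS2 : ∑ j ∈ Finset.range (k + 1), C a * (C (Phi ψ k (k - j)) * Bell j)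
      = C a * genBell ψ k := by
    rw [genBell, Finset.mul_sum]
  have hS1 : ∑ j ∈ Finset.range (k + 1), C (Phi ψ k (k - j + 1)) * Bell j
      = ∑ j ∈ Finset.range k, C (Phi ψ k (k - j)) * Bell (j + 1) := by
    rw [Finset.sum_range_succ']
    have h0 : Phi ψ k (k - 0 + 1) = 0 := Phi_gt ψ k _ (by omega)
    rw [h0, map_zero, zero_mul, add_zero]
    apply Finset.sum_congr rfl
    intro j hj
    rw [Finset.mem_range] at hj
    have he2 : k - (j + 1) + 1 = k - j := by omega
    rw [he2]
  have hT : ∑ j ∈ Finset.range (k + 1), C (Phi ψ k (k - j)) * Bell (j + 1)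
      = (∑ j ∈ Finset.range k, C (Phi ψ k (k - j)) * Bell (j + 1)) + Bell (k + 1) := by
    rw [Finset.sum_range_succ, Nat.sub_self, Phi_zero, map_one, one_mul]
  rw [hS2, hS1, hT]
  ring

lemma Phi_congr (φ φ' : ℕ → ℝ) (n i : ℕ) (h : ∀ j, 1 ≤ j → j ≤ n → φ j = φ' j) :
    Phi φ n i = Phi φ' n i := by
  apply Finset.sum_congr rfl
  intro s hs
  apply Finset.prod_congr rfl
  intro j hj
  have hsub := (Finset.mem_powersetCard.1 hs).1
  have hmem := Finset.mem_Icc.1 (hsub hj)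
  exact h j hmem.1 hmem.2

lemma genBell_congr (φ φ' : ℕ → ℝ) (n : ℕ) (h : ∀ j, 1 ≤ j → j ≤ n → φ j = φ' j) :
    genBell φ n = genBell φ' n := by
  rw [genBell, genBell]
  exact Finset.sum_congr rfl fun j _ => by rw [Phi_congr φ φ' n _ h]

lemma genBell_zero (φ : ℕ → ℝ) : genBell φ 0 = 1 := by
  rw [genBell]
  rw [Finset.sum_range_one]
  rw [Nat.sub_self, Phi_zero, map_one, one_mul]
  rfl

lemma lemmaP (ψ : ℕ → ℝ) : ∀ k, (∀ i, 1 ≤ i → i ≤ k → 0 < ψ i) →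
    ∃ s : ℕ → ℝ, (∀ i, i + 1 < k → s i < s (i + 1)) ∧ (∀ i, i < k → s i < 0) ∧
      genBell ψ k = prodP s k := by
  intro k
  induction k with
  | zero =>
    intro _
    refine ⟨fun _ => 0, by omega, by omega, ?_⟩
    rw [genBell_zero, prodP]
    simp
  | succ k ih =>
    intro hpos
    obtain ⟨s, hs, hneg, hgen⟩ := ih (fun i h1 h2 => hpos i h1 (by omega))
    have hpeel := genBell_peel ψ (k + 1) k (by omega) le_rfl
    have hre : genBell (removeIdx ψ (k + 1)) k = genBell ψ k :=
      genBell_congr _ _ k (fun j h1 h2 => by rw [removeIdx, if_pos (by omega)])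
    rw [hre, hgen] at hpeel
    set c := ψ (k + 1) with hc
    have hcpos : 0 < c := hpos (k + 1) (by omega) le_rfl
    have hpeel' : genBell ψ (k + 1) = Fq s k c := by rw [hpeel, Fq]
    set w : ℕ → ℝ := fun i => if i < k then s i else 0 with hw
    have hwlt : ∀ i, i < k → w i = s i := fun i hi => by simp only [hw, if_pos hi]
    have hwk : w k = 0 := by simp only [hw, if_neg (lt_irrefl k)]
    have hwmono : ∀ i, i < k → w i < w (i + 1) := by
      intro i hi
      rcases Nat.lt_or_ge (i + 1) k with h | h
      · rw [hwlt i hi, hwlt (i + 1) h]; exact hs i h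
      · have : i + 1 = k := by omega
        rw [hwlt i hi, this, hwk]; exact hneg i hi
    have hsign : ∀ i, i ≤ k → 0 < (-1:ℝ)^(k - i) * eval (w i) (Fq s k c) := by
      intro i hi
      rcases Nat.lt_or_ge i k with h | h
      · rw [hwlt i h]
        exact Fq_sign_at_root s k hs hneg c i h
      · have hik : i = k := by omega
        subst hik
        rw [Nat.sub_self, pow_zero, one_mul, hwk]
        rw [Fq, eval_add, eval_mul, eval_mul, eval_add, eval_X, eval_C, prodP_eval]
        simp only [zero_add, zero_mul, add_zero]
        apply mul_pos hcpos
        apply Finset.prod_pos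
        intro j hj
        rw [Finset.mem_range] at hj
        have := hneg j hj
        linarith
    obtain ⟨t, _, hprod, h1, h2⟩ := rootsLA k (Fq s k c) (Fq_monic s k c) (Fq_natDegree s k c)
      w hwmono hsign
    refine ⟨t, ?_, ?_, ?_⟩
    · intro i hi
      exact (h1 i (by omega)).trans (h2 i (by omega))
    · intro i hi
      rcases Nat.lt_or_ge i k with h | h
      · have := h1 i (by omega)
        rw [hwlt i h] at this
        exact this.trans (hneg i h)
      · have hik : i = k := by omega
        have h3 := h1 k le_rfl
        rw [hwk] at h3
        rw [hik]
        exact h3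
    · rw [hpeel', hprod]
      rfl

/-- let `φ` have exactly one negative term, at index `m`, and `n ≥ m`.
If `M > 0`, the `n` zeros of `Be_n^{φ^{m,M}}` interlace the `n` zeros of `Be_n^φ`;
if `M < 0`, the `n` zeros of `Be_n^φ` interlace the `n` zeros of `Be_n^{φ^{m,M}}`. -/
theorem genBell_addAt_neg_param_interlace (φ : ℕ → ℝ) (m : ℕ) (hm : 1 ≤ m)
    (hφm : φ m < 0) (hφ : ∀ i, 1 ≤ i → i ≠ m → 0 < φ i) (n : ℕ) (hn : m ≤ n) (M : ℝ) :
    (0 < M → Interlaces ((genBell (addAt φ m M) n).roots.toFinset)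
      ((genBell φ n).roots.toFinset)) ∧
    (M < 0 → Interlaces ((genBell φ n).roots.toFinset)
      ((genBell (addAt φ m M) n).roots.toFinset)) := by
  obtain ⟨k, rfl⟩ : ∃ k, n = k + 1 := ⟨n - 1, by omega⟩
  set ψ := removeIdx φ m with hψ
  have hψpos : ∀ i, 1 ≤ i → i ≤ k → 0 < ψ i := by
    intro i h1 h2
    rw [hψ, removeIdx]
    split_ifs with h
    · exact hφ i h1 (by omega)
    · exact hφ (i + 1) (by omega) (by omega)
  obtain ⟨s, hs, hneg, hgen⟩ := lemmaP ψ k hψpos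
  have hpeel1 : genBell φ (k + 1) = Fq s k (φ m) := by
    rw [genBell_peel φ m k hm hn, ← hψ, hgen, Fq]
  have hrem : removeIdx (addAt φ m M) m = ψ := by
    funext i
    simp only [hψ, removeIdx, addAt]
    split_ifs with h h2 h3 <;> first | (exfalso; omega) | rw [add_zero]
  have ham : addAt φ m M m = φ m + M := by rw [addAt, if_pos rfl]
  have hpeel2 : genBell (addAt φ m M) (k + 1) = Fq s k (φ m + M) := by
    rw [genBell_peel (addAt φ m M) m k hm hn, hrem, hgen, ham, Fq]
  constructor
  · intro hM
    rw [hpeel2, hpeel1]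
    exact pert k s hs hneg (φ m) (φ m + M) (by linarith)
  · intro hM
    rw [hpeel2, hpeel1]
    exact pert k s hs hneg (φ m + M) (φ m) (by linarith)
end

section
/- Let φ = (φ_i)_{i≥1} be a sequence of real numbers with φ_i = 0 for all i ≥ K+1, where K is a positive integer, and let l > 1 be an integer. The following are equivalent: (1) for every n ≥ K+1, x = 0 is a zero of Be_n^φ of multiplicity at least l; (2) for some n ≥ K+1, x = 0 is a zero of Be_n^φ of multiplicity at least l; (3) there exist indices i_1, …, i_{l−1} (necessarily in {1,…,K}) such that φ_{i_j} = −j for j = 1, …, l−1. -/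
/-! Put `p_n(x) = ∏_{i=1}^n (x + φ_i) = ∑_j Φ^n_{n-j} x^j`, so that `Be_n^φ` is the image of `p_n`
under the linear map `x^j ↦ Be_j`. Stirling's formula `m! [x^m] Be_j = Δ^m x^j (0)` then gives
`m! [x^m] Be_n^φ = Δ^m p_n (0)`, and by the Newton formulas these forward differences vanish for
all `m < l` exactly when `p_n(0) = ⋯ = p_n(l-1) = 0`. If `φ_i = 0` for `i > K` and `n > K`, then
`p_n(x) = p_K(x) x^{n-K}`: the value at `0` vanishes automatically, and `p_n(r) = 0` for
`1 ≤ r < l` says that `-r` is among `φ_1, …, φ_K`, a condition independent of `n`. -/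

open Polynomial

open fwdDiff

theorem fwdDiff_iter_succ_id_mul {R : Type*} [CommRing R] (g : R → R) (m : ℕ) :
    Δ_[1] ^[m + 1] (fun x ↦ x * g x) =
      fun x ↦ (x + (m + 1)) * Δ_[1] ^[m + 1] g x + (m + 1) * Δ_[1] ^[m] g x := by
  induction m with
  | zero =>
    ext x
    simp only [Function.iterate_succ_apply', Function.iterate_zero_apply, fwdDiff]
    push_cast
    ring
  | succ m ih =>
    ext x
    rw [Function.iterate_succ_apply', ih]
    simp only [fwdDiff, Function.iterate_succ_apply']
    push_cast
    ring

theorem forall_fwdDiff_iter_eq_zero_iff {M G : Type*} [AddCommMonoid M] [AddCommGroup G]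
    (h : M) (f : M → G) (y : M) (l : ℕ) :
    (∀ m < l, Δ_[h] ^[m] f y = 0) ↔ ∀ k < l, f (y + k • h) = 0 := by
  constructor
  · intro hf k hk
    rw [shift_eq_sum_fwdDiff_iter h f k y]
    exact Finset.sum_eq_zero fun m hm ↦ by
      rw [hf m (by have := Finset.mem_range.mp hm; omega), smul_zero]
  · intro hf m hm
    rw [fwdDiff_iter_eq_sum_shift]
    exact Finset.sum_eq_zero fun k hk ↦ by
      rw [hf k (by have := Finset.mem_range.mp hk; omega), smul_zero]

theorem factorial_mul_coeff_Bell (j m : ℕ) :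
    (m.factorial : ℝ) * (Bell j).coeff m = Δ_[1] ^[m] (fun x : ℝ ↦ x ^ j) 0 := by
  induction j generalizing m with
  | zero =>
    rcases m with _ | m
    · simp [Bell]
    · rw [fwdDiff_iter_pow_eq_zero_of_lt (Nat.succ_pos m)]
      simp [Bell, coeff_one]
  | succ j ih =>
    rcases m with _ | m
    · simp [Bell]
    · simp_rw [pow_succ' _ j]
      rw [fwdDiff_iter_succ_id_mul, Bell, coeff_X_mul, coeff_add, coeff_derivative,
        Nat.factorial_succ]
      have ih' := ih (m + 1)
      rw [Nat.factorial_succ] at ih'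
      push_cast at ih' ⊢
      linear_combination ((m : ℝ) + 1) * ih m + ((m : ℝ) + 1) * ih'

noncomputable def phiPoly (φ : ℕ → ℝ) (n : ℕ) : ℝ[X] :=
  ∏ i ∈ Finset.Icc 1 n, (X + C (φ i))

theorem natDegree_phiPoly (φ : ℕ → ℝ) (n : ℕ) : (phiPoly φ n).natDegree = n := by
  rw [phiPoly, natDegree_prod_of_monic _ _ fun i _ ↦ monic_X_add_C (φ i)]
  simp

theorem leadingCoeff_phiPoly (φ : ℕ → ℝ) (n : ℕ) : (phiPoly φ n).leadingCoeff = 1 :=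
  monic_prod_of_monic _ _ fun i _ ↦ monic_X_add_C (φ i)

theorem coeff_phiPoly (φ : ℕ → ℝ) {n k : ℕ} (hk : k ≤ n) :
    (phiPoly φ n).coeff k = Phi φ n (n - k) := by
  rw [phiPoly, Finset.prod_X_add_C_coeff _ _ (by simpa using hk), Phi]
  simp

theorem eval_phiPoly (φ : ℕ → ℝ) (n : ℕ) (x : ℝ) :
    (phiPoly φ n).eval x = ∏ i ∈ Finset.Icc 1 n, (x + φ i) := by
  simp [phiPoly, eval_prod]

theorem factorial_mul_coeff_genBell (φ : ℕ → ℝ) (n m : ℕ) :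
    (m.factorial : ℝ) * (genBell φ n).coeff m = Δ_[1] ^[m] (phiPoly φ n).eval 0 := by
  have hsum : (phiPoly φ n).eval =
      ∑ j ∈ Finset.range (n + 1), Phi φ n (n - j) • fun x : ℝ ↦ x ^ j := by
    ext x
    rw [eval_eq_sum_range' (n := n + 1) (by rw [natDegree_phiPoly]; omega), Finset.sum_apply]
    refine Finset.sum_congr rfl fun j hj ↦ ?_
    rw [coeff_phiPoly φ (Finset.mem_range_succ_iff.mp hj), Pi.smul_apply, smul_eq_mul]
  rw [hsum, fwdDiff_iter_finsetSum, Finset.sum_apply, genBell, finsetSum_coeff, Finset.mul_sum]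
  refine Finset.sum_congr rfl fun j _ ↦ ?_
  rw [fwdDiff_iter_const_smul, Pi.smul_apply, smul_eq_mul, ← factorial_mul_coeff_Bell, coeff_C_mul]
  ring

theorem genBell_ne_zero (φ : ℕ → ℝ) (n : ℕ) : genBell φ n ≠ 0 := by
  intro h
  have hlead := fwdDiff_iter_degree_eq_factorial (phiPoly φ n)
  rw [natDegree_phiPoly, leadingCoeff_phiPoly, one_smul] at hlead
  have hn := factorial_mul_coeff_genBell φ n n
  rw [h, coeff_zero, mul_zero, hlead] at hn
  rw [Pi.natCast_apply, eq_comm, Nat.cast_eq_zero] at hn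
  exact n.factorial_ne_zero hn

theorem le_rootMultiplicity_zero_genBell_iff (φ : ℕ → ℝ) (n l : ℕ) :
    l ≤ (genBell φ n).rootMultiplicity 0 ↔ ∀ k < l, ∃ i ∈ Finset.Icc 1 n, φ i = -k := by
  rw [le_rootMultiplicity_iff (genBell_ne_zero φ n), map_zero, sub_zero, X_pow_dvd_iff]
  have hcoeff : ∀ m, (genBell φ n).coeff m = 0 ↔ Δ_[1] ^[m] (phiPoly φ n).eval 0 = 0 := fun m ↦ by
    rw [← factorial_mul_coeff_genBell, mul_eq_zero_iff_left (by positivity)]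
  simp_rw [hcoeff, forall_fwdDiff_iter_eq_zero_iff, eval_phiPoly, Finset.prod_eq_zero_iff,
    zero_add, nsmul_one, add_eq_zero_iff_eq_neg']

theorem exists_mem_Icc_eq_neg_iff {φ : ℕ → ℝ} {K n : ℕ} (hφ : ∀ i, K + 1 ≤ i → φ i = 0)
    (hn : K + 1 ≤ n) (k : ℕ) :
    (∃ i ∈ Finset.Icc 1 n, φ i = -k) ↔ k = 0 ∨ ∃ i ∈ Finset.Icc 1 K, φ i = -k := by
  constructor
  · rintro ⟨i, hi, hφi⟩
    by_cases hiK : i ≤ K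
    · exact Or.inr ⟨i, Finset.mem_Icc.2 ⟨(Finset.mem_Icc.1 hi).1, hiK⟩, hφi⟩
    · rw [hφ i (by omega), eq_comm, neg_eq_zero] at hφi
      exact Or.inl (mod_cast hφi)
  · rintro (rfl | ⟨i, hi, hφi⟩)
    · exact ⟨n, Finset.mem_Icc.2 ⟨by omega, le_rfl⟩, by simp [hφ n hn]⟩
    · exact ⟨i, Finset.Icc_subset_Icc_right (by omega) hi, hφi⟩

theorem le_rootMultiplicity_zero_genBell_iff_of_eq_zero {φ : ℕ → ℝ} {K n : ℕ}
    (hφ : ∀ i, K + 1 ≤ i → φ i = 0) (hn : K + 1 ≤ n) (l : ℕ) :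
    l ≤ (genBell φ n).rootMultiplicity 0 ↔
      ∀ j, 1 ≤ j → j ≤ l - 1 → ∃ i ∈ Finset.Icc 1 K, φ i = -j := by
  simp_rw [le_rootMultiplicity_zero_genBell_iff, exists_mem_Icc_eq_neg_iff hφ hn]
  constructor
  · exact fun h j hj₁ hj₂ ↦ (h j (by omega)).resolve_left (by omega)
  · rintro h (_ | k) hk
    · exact Or.inl rfl
    · exact Or.inr (h (k + 1) (by omega) (by omega))

theorem genBell_multiplicity_zero_tfae_general (K : ℕ) (φ : ℕ → ℝ)
    (hφ : ∀ i, K + 1 ≤ i → φ i = 0) (l : ℕ) :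
    ((∀ n, K + 1 ≤ n → l ≤ (genBell φ n).rootMultiplicity 0) ↔
      (∃ n, K + 1 ≤ n ∧ l ≤ (genBell φ n).rootMultiplicity 0)) ∧
    ((∃ n, K + 1 ≤ n ∧ l ≤ (genBell φ n).rootMultiplicity 0) ↔
      (∃ idx : ℕ → ℕ, ∀ j, 1 ≤ j → j ≤ l - 1 →
        1 ≤ idx j ∧ idx j ≤ K ∧ φ (idx j) = -(j : ℝ))) := by
  have hmult n (hn : K + 1 ≤ n) := le_rootMultiplicity_zero_genBell_iff_of_eq_zero hφ hn l
  refine ⟨⟨fun h ↦ ⟨K + 1, le_rfl, h _ le_rfl⟩,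
    fun ⟨n, hn, h⟩ m hm ↦ (hmult m hm).2 ((hmult n hn).1 h)⟩,
    fun ⟨n, hn, h⟩ ↦ ?_, fun ⟨idx, hidx⟩ ↦ ⟨K + 1, le_rfl, (hmult _ le_rfl).2 fun j hj₁ hj₂ ↦ ?_⟩⟩
  · choose! idx hidx using (hmult n hn).1 h
    exact ⟨idx, fun j hj₁ hj₂ ↦ by simpa only [Finset.mem_Icc, and_assoc] using hidx j hj₁ hj₂⟩
  · obtain ⟨h₁, h₂, h₃⟩ := hidx j hj₁ hj₂
    exact ⟨idx j, Finset.mem_Icc.2 ⟨h₁, h₂⟩, h₃⟩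

/-- let `φ_i = 0` for `i ≥ K+1` and `l > 1`. The following are equivalent:
(1) for every `n ≥ K+1`, `x = 0` is a zero of `Be_n^φ` of multiplicity at least `l`;
(2) for some `n ≥ K+1`, `x = 0` is a zero of `Be_n^φ` of multiplicity at least `l`;
(3) there are indices `i_1, …, i_{l−1}` with `φ_{i_j} = −j` for `j = 1, …, l−1`. -/
theorem genBell_multiplicity_zero_tfae (K : ℕ) (hK : 1 ≤ K) (φ : ℕ → ℝ)
    (hφ : ∀ i, K + 1 ≤ i → φ i = 0) (l : ℕ) (hl : 1 < l) :
    ((∀ n, K + 1 ≤ n → l ≤ (genBell φ n).rootMultiplicity 0) ↔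
      (∃ n, K + 1 ≤ n ∧ l ≤ (genBell φ n).rootMultiplicity 0)) ∧
    ((∃ n, K + 1 ≤ n ∧ l ≤ (genBell φ n).rootMultiplicity 0) ↔
      (∃ idx : ℕ → ℕ, ∀ j, 1 ≤ j → j ≤ l - 1 →
        1 ≤ idx j ∧ idx j ≤ K ∧ φ (idx j) = -(j : ℝ))) :=
  genBell_multiplicity_zero_tfae_general K φ hφ l
end
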